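/- Let $\mathcal{C}'$ be a valid tuple of a $K$-tree ensemble and suppose all trees have unique (pairwise distinct) split thresholds across the ensemble. If $\mathcal{C}$ is a valid tuple obtained by perturbing a point $x' \in B(\mathcal{C}')$ infinitesimally across exactly one facet of $B(\mathcal{C}')$ (i.e., moving one coordinate just past one endpoint of the corresponding interval of $B(\mathcal{C})$), then $\mathcal{C}$ has Hamming distance exactly 1 from $\mathcal{C}'$. -/
import Mathlib


open Set

/-- An axis-aligned box in `ℝ^d`: a product of half-open intervals `(l j, r j]`
with extended-real endpoints. -/
def box {d : ℕ} (l r : Fin d → EReal) : Set (Fin d → ℝ) :=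
  {x | ∀ j, l j < (x j : EReal) ∧ (x j : EReal) ≤ r j}

/-- Distance from a point `a : ℝ` to the half-open interval `(l, r]`
(infimum of `|a - b|` over points `b` of the interval). -/
noncomputable def intervalDist (a : ℝ) (l r : EReal) : ℝ :=
  sInf {y | ∃ b : ℝ, l < (b : EReal) ∧ (b : EReal) ≤ r ∧ y = |a - b|}

/-- A binary decision tree on `ℝ^d`: leaves carry real values, internal nodes
carry a split `(j, η)` routing `x` left iff `x j ≤ η`. -/
inductive DTree (d : ℕ) : Type
  | leaf (val : ℝ) : DTree d
  | node (j : Fin d) (η : ℝ) (L R : DTree d) : DTree d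

namespace DTree

variable {d : ℕ}

/-- Depth: maximum number of internal nodes on a root-to-leaf path. -/
def depth : DTree d → ℕ
  | .leaf _ => 0
  | .node _ _ L R => max L.depth R.depth + 1

/-- Number of leaves. -/
def numLeaves : DTree d → ℕ
  | .leaf _ => 1
  | .node _ _ L R => L.numLeaves + R.numLeaves

/-- The list of leaf regions (sets of inputs routed to each leaf), in left-to-right order. -/
def leafRegions : DTree d → List (Set (Fin d → ℝ))
  | .leaf _ => [Set.univ]
  | .node j η L R =>
      (L.leafRegions.map fun s => s ∩ {x | x j ≤ η}) ++
      (R.leafRegions.map fun s => s ∩ {x | η < x j})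

/-- The region (bounding box) of the leaf with index `i`. -/
def region (T : DTree d) (i : ℕ) : Set (Fin d → ℝ) := T.leafRegions.getD i ∅

/-- Index of the leaf reached by input `x`. -/
noncomputable def leafIdx : DTree d → (Fin d → ℝ) → ℕ
  | .leaf _, _ => 0
  | .node j η L R, x => if x j ≤ η then L.leafIdx x else L.numLeaves + R.leafIdx x

/-- The list of leaf values, in left-to-right order. -/
def leafVals : DTree d → List ℝ
  | .leaf v => [v]
  | .node _ _ L R => L.leafVals ++ R.leafVals

/-- Value of the leaf with index `i`. -/
def leafVal (T : DTree d) (i : ℕ) : ℝ := T.leafVals.getD i 0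

/-- List of all split thresholds `(j, η)` appearing at internal nodes. -/
def splits : DTree d → List (Fin d × ℝ)
  | .leaf _ => []
  | .node j η L R => (j, η) :: (L.splits ++ R.splits)

end DTree

/-- The intersection `B(𝒞)` of the bounding boxes of the leaves of tuple `𝒞`
in a `K`-tree ensemble. -/
def Bset {d K : ℕ} (f : Fin K → DTree d) (C : Fin K → ℕ) : Set (Fin d → ℝ) :=
  ⋂ t, (f t).region (C t)

/-- Hamming distance between two leaf tuples: the number of trees on which they differ. -/
def hamD {K : ℕ} {α : Type*} [DecidableEq α] (C C' : Fin K → α) : ℕ :=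
  (Finset.univ.filter fun t => C t ≠ C' t).card


namespace DTree

lemma length_leafRegions {d : ℕ} (T : DTree d) : T.leafRegions.length = T.numLeaves := by
  induction T with
  | leaf v => simp [leafRegions, numLeaves]
  | node j η L R ihL ihR => simp [leafRegions, numLeaves, ihL, ihR]

lemma leafIdx_lt {d : ℕ} (T : DTree d) (x : Fin d → ℝ) : T.leafIdx x < T.numLeaves := by
  induction T with
  | leaf v => simp [leafIdx, numLeaves]
  | node j η L R ihL ihR =>
    simp only [leafIdx, numLeaves]
    split
    · omega
    · omega

lemma mem_region_leafIdx {d : ℕ} (T : DTree d) (x : Fin d → ℝ) :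
    x ∈ T.region (T.leafIdx x) := by
  induction T with
  | leaf v => simp [region, leafIdx, leafRegions]
  | node j η L R ihL ihR =>
    simp only [region, leafIdx, leafRegions]
    by_cases h : x j ≤ η
    · rw [if_pos h]
      have hlt : L.leafIdx x < (L.leafRegions.map fun s => s ∩ {x | x j ≤ η}).length := by
        simpa [length_leafRegions] using leafIdx_lt L x
      rw [List.getD_eq_getElem _ _ (by simpa using Nat.lt_of_lt_of_le hlt (Nat.le_add_right _ _)),
        List.getElem_append_left hlt, List.getElem_map]
      refine ⟨?_, h⟩
      have := ihL
      rwa [region, List.getD_eq_getElem _ _ (by simpa [length_leafRegions] using leafIdx_lt L x)] at this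
    · rw [if_neg h]
      have hlt : R.leafIdx x < R.leafRegions.length := by
        simpa [length_leafRegions] using leafIdx_lt R x
      have hlen : (L.leafRegions.map fun s => s ∩ {x | x j ≤ η}).length = L.numLeaves := by
        simp [length_leafRegions]
      have htot : L.numLeaves + R.leafIdx x <
          ((L.leafRegions.map fun s => s ∩ {x | x j ≤ η}) ++
            (R.leafRegions.map fun s => s ∩ {x | η < x j})).length := by
        simp only [List.length_append, List.length_map, length_leafRegions]
        exact Nat.add_lt_add_left (leafIdx_lt R x) _
      rw [List.getD_eq_getElem _ _ htot,
        List.getElem_append_right (by rw [hlen]; exact Nat.le_add_right _ _)]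
      simp only [hlen]
      rw [List.getElem_map]
      constructor
      · have := ihR
        rw [region, List.getD_eq_getElem _ _ hlt] at this
        convert this using 2
        simp [hlen]
      · exact lt_of_not_ge h

lemma leafIdx_congr {d : ℕ} (T : DTree d) (x y : Fin d → ℝ)
    (h : ∀ p ∈ T.splits, (x p.1 ≤ p.2 ↔ y p.1 ≤ p.2)) :
    T.leafIdx x = T.leafIdx y := by
  induction T with
  | leaf v => rfl
  | node j η L R ihL ihR =>
    have hjη := h (j, η) (by simp [splits])
    simp only [leafIdx]
    by_cases hx : x j ≤ η
    · rw [if_pos hx, if_pos (hjη.mp hx)]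
      exact ihL fun p hp => h p (by simp [splits, hp])
    · rw [if_neg hx, if_neg (fun hy => hx (hjη.mpr hy))]
      rw [ihR fun p hp => h p (by simp [splits, hp])]

end DTree

/-- with pairwise distinct split thresholds across the ensemble,
perturbing `x'` across exactly one facet of `B(𝒞(x'))` (crossing exactly one
threshold `(j, η)` while all other split predicates keep their values, and
leaving `B(𝒞(x'))`) yields a tuple at Hamming distance exactly 1. -/

theorem stmt_16 {d K : ℕ} (f : Fin K → DTree d)
    (hnodup : ((List.ofFn fun t => (f t).splits).flatten).Nodup)
    (x' x'' : Fin d → ℝ) (j : Fin d) (η : ℝ)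
    (hexists : ∃ t, (j, η) ∈ (f t).splits)
    (hcross : (x' j ≤ η) ≠ (x'' j ≤ η))
    (hothers : ∀ t : Fin K, ∀ p ∈ (f t).splits, p ≠ (j, η) →
      ((x' p.1 ≤ p.2) ↔ (x'' p.1 ≤ p.2)))
    (hleave : x'' ∉ Bset f (fun t => (f t).leafIdx x')) :
    hamD (fun t => (f t).leafIdx x'') (fun t => (f t).leafIdx x') = 1 := by
  classical
  obtain ⟨t₀, ht₀⟩ := hexists
  have uniq : ∀ t : Fin K, (j, η) ∈ (f t).splits → t = t₀ := by
    intro t ht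
    by_contra hne
    rw [List.nodup_flatten] at hnodup
    have hpw := hnodup.2
    rw [List.pairwise_iff_getElem] at hpw
    rcases lt_or_gt_of_ne hne with hlt | hlt
    · have := hpw t t₀ (by simp [t.isLt]) (by simp [t₀.isLt]) (by simpa using hlt)
      simp only [List.getElem_ofFn] at this
      exact absurd ht₀ ((List.disjoint_left.mp this) (by simpa using ht))
    · have := hpw t₀ t (by simp [t₀.isLt]) (by simp [t.isLt]) (by simpa using hlt)
      simp only [List.getElem_ofFn] at this
      exact absurd ht ((List.disjoint_left.mp this) (by simpa using ht₀))
  have hsub : (Finset.univ.filter fun t => (f t).leafIdx x'' ≠ (f t).leafIdx x') ⊆ {t₀} := by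
    intro t ht
    simp only [Finset.mem_filter] at ht
    by_contra hne
    simp only [Finset.mem_singleton] at hne
    have hnotin : (j, η) ∉ (f t).splits := fun h => hne (uniq t h)
    exact ht.2 (DTree.leafIdx_congr (f t) x'' x' fun p hp =>
      (hothers t p hp (fun he => hnotin (he ▸ hp))).symm)
  have hmem : t₀ ∈ (Finset.univ.filter fun t => (f t).leafIdx x'' ≠ (f t).leafIdx x') := by
    simp only [Bset, Set.mem_iInter, not_forall] at hleave
    obtain ⟨s, hs⟩ := hleave
    have hdiff : (f s).leafIdx x'' ≠ (f s).leafIdx x' := by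
      intro he
      exact hs (he ▸ DTree.mem_region_leafIdx (f s) x'')
    have : s ∈ (Finset.univ.filter fun t => (f t).leafIdx x'' ≠ (f t).leafIdx x') := by
      simp [hdiff]
    have := hsub this
    simp only [Finset.mem_singleton] at this
    subst this
    simp [hdiff]
  have : (Finset.univ.filter fun t => (f t).leafIdx x'' ≠ (f t).leafIdx x') = {t₀} :=
    Finset.Subset.antisymm hsub (Finset.singleton_subset_iff.mpr hmem)
  simp [hamD, this]
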